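/- Let n ≥ 3 be an integer. (a) If h ∈ ℝ⁴ satisfies M(n,n)·h = 0 and M′(n,n)·h lies in the column space of M(n,n), then h lies in the column space of D(n). (b) The kernel of M(n,n) is the direct sum of the column space of D(n) and the line spanned by e₄ = (0,0,0,1); in particular e₄ ∈ ker M(n,n) but e₄ does not lie in the column space of D(n), so ker M(n,n)/ran D(n) is one-dimensional and spanned by the class of e₄. -/
import Mathlib


open Matrix

/-- The indicial family `I(D Ric − Λ, λ)` (with `Λ = n`) of the linearized Einstein
operator on asymptotically de Sitter space, in the scalar block decomposition. -/
noncomputable def M (n : ℕ) (lam : ℝ) : Matrix (Fin 4) (Fin 4) ℝ :=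
  (1 / 2 : ℝ) • !![(n : ℝ) * (lam - 2), 0, -(n : ℝ) * lam * (lam - 2), 0;
                   0, 0, 0, 0;
                   2 * (n : ℝ) - lam, 0, lam * (lam - 2 * (n : ℝ)), 0;
                   0, 0, 0, lam * (lam - (n : ℝ))]

/-- The entrywise derivative of `M(n,λ)` with respect to `λ`. -/
noncomputable def Mder (n : ℕ) (lam : ℝ) : Matrix (Fin 4) (Fin 4) ℝ :=
  Matrix.of fun i j => deriv (fun t : ℝ => M n t i j) lam

/-- The indicial family `I(δ*, λ)` of the symmetric gradient acting on one-forms,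
in the scalar block decomposition. -/
noncomputable def D (lam : ℝ) : Matrix (Fin 4) (Fin 2) ℝ :=
  !![lam, 0;
     0, (lam + 1) / 2;
     1, 0;
     0, 0]

lemma mem_range_D_iff (lam : ℝ) (hl : lam + 1 ≠ 0) (x : Fin 4 → ℝ) :
    x ∈ LinearMap.range (D lam).mulVecLin ↔ x 0 = lam * x 2 ∧ x 3 = 0 := by
  constructor
  · rintro ⟨v, rfl⟩
    simp [D, Matrix.mulVecLin, Matrix.mulVec, dotProduct, Fin.sum_univ_two]
  · rintro ⟨h0, h3⟩
    refine ⟨![x 2, 2 * x 1 / (lam + 1)], ?_⟩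
    funext i
    fin_cases i <;>
      simp [D, Matrix.mulVecLin, Matrix.mulVec, dotProduct, Fin.sum_univ_two, h0, h3] <;>
      field_simp <;> ring

/-- At the exceptional indicial root `λ = n`:
(a) if `M(n,n)h = 0` and `M′(n,n)h ∈ ran M(n,n)`, then `h ∈ ran D(n)`;
(b) `ker M(n,n) = ran D(n) ⊕ ℝ·e₄`, with `e₄ = (0,0,0,1)` in the kernel but not in
the range of `D(n)`, so `ker M(n,n)/ran D(n)` is spanned by the class of `e₄`. -/
theorem kernel_at_root_n (n : ℕ) (hn : 3 ≤ n) :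
    (∀ h : Fin 4 → ℝ, (M n (n : ℝ)).mulVec h = 0 →
      (Mder n (n : ℝ)).mulVec h ∈ LinearMap.range (M n (n : ℝ)).mulVecLin →
      h ∈ LinearMap.range (D (n : ℝ)).mulVecLin) ∧
    LinearMap.ker (M n (n : ℝ)).mulVecLin
      = LinearMap.range (D (n : ℝ)).mulVecLin ⊔ Submodule.span ℝ {![0, 0, 0, (1 : ℝ)]} ∧
    LinearMap.range (D (n : ℝ)).mulVecLin ⊓ Submodule.span ℝ {![0, 0, 0, (1 : ℝ)]} = ⊥ ∧
    (M n (n : ℝ)).mulVec ![0, 0, 0, 1] = 0 ∧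
    ![0, 0, 0, (1 : ℝ)] ∉ LinearMap.range (D (n : ℝ)).mulVecLin := by
  have hn3 : (3 : ℝ) ≤ (n : ℝ) := by exact_mod_cast hn
  have hN : (n : ℝ) ≠ 0 := by linarith
  have hN2 : (n : ℝ) - 2 ≠ 0 := by intro h; linarith
  have hN1 : (n : ℝ) + 1 ≠ 0 := by linarith
  -- kernel description
  have hker : ∀ h : Fin 4 → ℝ, (M n (n : ℝ)).mulVec h = 0 ↔ h 0 = (n : ℝ) * h 2 := by
    intro h
    constructor
    · intro hh
      have h2 := congrFun hh 2
      simp [M, Matrix.mulVec, dotProduct, Fin.sum_univ_four] at h2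
      have : (n : ℝ) * (h 0 - (n : ℝ) * h 2) = 0 := by ring_nf; ring_nf at h2; linarith
      have := mul_eq_zero.mp this
      rcases this with h' | h'
      · exact absurd h' hN
      · linarith
    · intro h0
      funext i
      fin_cases i <;>
        simp [M, Matrix.mulVec, dotProduct, Fin.sum_univ_four, h0] <;> ring
  -- range of M has vanishing third component
  have hranM3 : ∀ y ∈ LinearMap.range (M n (n : ℝ)).mulVecLin, y 3 = 0 := by
    rintro y ⟨x, rfl⟩
    simp [M, Matrix.mulVecLin, Matrix.mulVec, dotProduct, Fin.sum_univ_four]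
  -- Mder third row
  have hMd3 : ∀ h : Fin 4 → ℝ, (Mder n (n : ℝ)).mulVec h 3 = (n : ℝ) / 2 * h 3 := by
    intro h
    have e0 : (fun t : ℝ => M n t 3 0) = fun _ => (0 : ℝ) := by
      funext t; simp [M, Matrix.vecHead, Matrix.vecTail, Function.comp]
    have e1 : (fun t : ℝ => M n t 3 1) = fun _ => (0 : ℝ) := by
      funext t; simp [M, Matrix.vecHead, Matrix.vecTail, Function.comp]
    have e2 : (fun t : ℝ => M n t 3 2) = fun _ => (0 : ℝ) := by
      funext t; simp [M, Matrix.vecHead, Matrix.vecTail, Function.comp]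
    have e3 : (fun t : ℝ => M n t 3 3) = fun t => 1/2 * (t * (t - (n : ℝ))) := by
      funext t; simp [M, Matrix.vecHead, Matrix.vecTail, Function.comp]
    have d3 : deriv (fun t : ℝ => M n t 3 3) (n : ℝ) = (n : ℝ) / 2 := by
      rw [e3]
      have : HasDerivAt (fun t : ℝ => 1/2 * (t * (t - (n : ℝ))))
          (1/2 * (1 * ((n:ℝ) - (n:ℝ)) + (n:ℝ) * (1 - 0))) (n : ℝ) :=
        (((hasDerivAt_id (n:ℝ)).mul ((hasDerivAt_id (n:ℝ)).sub
          (hasDerivAt_const (n:ℝ) (n:ℝ))))).const_mul (1/2)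
      rw [this.deriv]; ring
    simp [Mder, Matrix.mulVec, dotProduct, Fin.sum_univ_four, d3, e0, e1, e2]
  refine ⟨?_, ?_, ?_, ?_, ?_⟩
  · intro h hk hr
    have h0 : h 0 = (n : ℝ) * h 2 := (hker h).mp hk
    have h3 : h 3 = 0 := by
      have := hranM3 _ hr
      rw [hMd3 h] at this
      have := mul_eq_zero.mp this
      rcases this with h' | h'
      · exact absurd h' (by positivity)
      · exact h'
    exact (mem_range_D_iff _ hN1 h).mpr ⟨h0, h3⟩
  · ext x
    rw [LinearMap.mem_ker, Matrix.mulVecLin_apply]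
    constructor
    · intro hx
      have h0 : x 0 = (n : ℝ) * x 2 := (hker x).mp hx
      refine Submodule.mem_sup.mpr ⟨![x 0, x 1, x 2, 0], ?_, x 3 • ![0,0,0,1], ?_, ?_⟩
      · exact (mem_range_D_iff _ hN1 _).mpr ⟨by simpa using h0, by simp⟩
      · exact Submodule.smul_mem _ _ (Submodule.mem_span_singleton_self _)
      · funext i; fin_cases i <;> simp
    · intro hx
      rcases Submodule.mem_sup.mp hx with ⟨y, hy, z, hz, rfl⟩
      obtain ⟨hy0, hy3⟩ := (mem_range_D_iff _ hN1 y).mp hy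
      obtain ⟨c, rfl⟩ := Submodule.mem_span_singleton.mp hz
      exact (hker _).mpr (by simp [hy0])
  · rw [eq_bot_iff]
    rintro x ⟨hx1, hx2⟩
    obtain ⟨c, rfl⟩ := Submodule.mem_span_singleton.mp hx2
    have h3 := ((mem_range_D_iff _ hN1 _).mp hx1).2
    simp at h3
    simp [h3]
  · exact (hker _).mpr (by simp)
  · intro hc
    have := ((mem_range_D_iff _ hN1 _).mp hc).2
    simp at this
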